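/- Assume K = k_i + k_j = 3. Then the classes modulo B of the cocycles (0, x⁻¹) and (0, x⁻²) form a basis of the ℂ-vector space V/B; in particular dim_ℂ V/B = 2. -/

import Mathlib

/-! For `K = 3` a cochain in `B₀` has no negative powers, and one in `B₁` has `a` with no power
above `x⁻¹` and `b - kl·x⁻¹·a` with none above `x⁻³`.  So the functionals `b₋₁` and
`b₋₂ - kl·a₋₁` vanish on `B`; conversely, when they vanish, splitting `(a, b)` into its
nonnegative part and its principal part writes it as an element of `B₀` plus one of `B₁`.
Hence `B` is the kernel of a surjection `V → ℂ²` sending `(0, x⁻¹)`, `(0, x⁻²)` to the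
standard basis. -/

noncomputable section

open LaurentPolynomial

/-- `L = ℂ[x, x⁻¹]`, the Laurent polynomials over `ℂ`. -/
abbrev L : Type := LaurentPolynomial ℂ

/-- The coefficient of `x^n` in a Laurent polynomial. -/
def coeffL (p : L) (n : ℤ) : ℂ := (AddMonoidAlgebra.coeff p : ℤ →₀ ℂ) n

lemma coeffL_zero (n : ℤ) : coeffL 0 n = 0 := rfl

lemma coeffL_add (a b : L) (n : ℤ) : coeffL (a + b) n = coeffL a n + coeffL b n := by
  unfold coeffL; erw [Finsupp.add_apply]; rfl

lemma coeffL_smul (c : ℂ) (a : L) (n : ℤ) : coeffL (c • a) n = c * coeffL a n := by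
  unfold coeffL; erw [Finsupp.smul_apply]; rfl

/-- `L₊`: Laurent polynomials involving only nonnegative powers of `x`. -/
def Lplus : Submodule ℂ L where
  carrier := {p | ∀ n : ℤ, n < 0 → coeffL p n = 0}
  zero_mem' := fun n _ => coeffL_zero n
  add_mem' := by intro a b ha hb n hn; rw [coeffL_add, ha n hn, hb n hn, add_zero]
  smul_mem' := by intro c p hp n hn; rw [coeffL_smul, hp n hn, mul_zero]

/-- `L₋`: Laurent polynomials involving only nonpositive powers of `x`. -/
def Lminus : Submodule ℂ L where
  carrier := {p | ∀ n : ℤ, 0 < n → coeffL p n = 0}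
  zero_mem' := fun n _ => coeffL_zero n
  add_mem' := by intro a b ha hb n hn; rw [coeffL_add, ha n hn, hb n hn, add_zero]
  smul_mem' := by intro c p hp n hn; rw [coeffL_smul, hp n hn, mul_zero]

/-- The derivative `d/dx` on Laurent polynomials. -/
def D (p : L) : L := Finsupp.sum (AddMonoidAlgebra.coeff p : ℤ →₀ ℂ) fun n a => ((n : ℂ) * a) • T (n - 1)

/-- `V = L × L`, the model of Čech 1-cochains with values in `T₂^{ij}`:
a pair `(a, b)` encodes `a(x)ξᵢξⱼ∂/∂x + b(x)ξᵢξⱼξₗ∂/∂ξₗ` on `U₀ ∩ U₁`. -/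
abbrev V : Type := L × L

/-- `B₀ = L₊ × L₊`: cochains holomorphic in `U₀`. -/
def B0 : Submodule ℂ V := Lplus.prod Lplus

/-- `B₁`: cochains holomorphic in `U₁`, i.e. pairs `(a, b)` with
`x^(K-2)·a ∈ L₋` and `x^K·(b - kl·x⁻¹·a) ∈ L₋`. -/
def B1 (K kl : ℤ) : Submodule ℂ V :=
  Lminus.comap ((LinearMap.mulLeft ℂ (T (K - 2))).comp (LinearMap.fst ℂ L L)) ⊓
  Lminus.comap ((LinearMap.mulLeft ℂ (T K)).comp
    (LinearMap.snd ℂ L L - (kl : ℂ) • (LinearMap.mulLeft ℂ (T (-1))).comp (LinearMap.fst ℂ L L)))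

/-- The coboundary subspace `B = B₀ + B₁`. -/
def B (K kl : ℤ) : Submodule ℂ V := B0 ⊔ B1 K kl

/-- Action of `e = ∂/∂x` on cocycles: `E(a, b) = (a′, b′)`. -/
def Eop : V → V := fun p => (D p.1, D p.2)

/-- Action of `f = ∂/∂y` on cocycles:
`F(a, b) = ((2−K)·x·a − x²·a′, kl·a − K·x·b − x²·b′)`. -/
def Fop (K kl : ℤ) : V → V := fun p =>
  (((2 - K : ℤ) : ℂ) • (T 1 * p.1) - T 2 * D p.1,
   (kl : ℂ) • p.1 - (K : ℂ) • (T 1 * p.2) - T 2 * D p.2)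



lemma coeffL_sub (a b : L) (n : ℤ) : coeffL (a - b) n = coeffL a n - coeffL b n := by
  unfold coeffL; erw [AddMonoidAlgebra.coeff_sub, Finsupp.sub_apply]

lemma coeffL_T (m n : ℤ) : coeffL (T m) n = if m = n then 1 else 0 :=
  T_apply n m

lemma coeffL_T_mul (m : ℤ) (p : L) (n : ℤ) : coeffL (T m * p) n = coeffL p (n - m) := by
  unfold coeffL
  erw [AddMonoidAlgebra.coeff_single_mul_apply]
  rw [one_mul]; congr 1; ring

lemma T_mul_mem_Lminus_iff {m : ℤ} {p : L} :
    T m * p ∈ Lminus ↔ ∀ n : ℤ, -m < n → coeffL p n = 0 := by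
  refine ⟨fun h n hn => ?_, fun h n hn => ?_⟩
  · simpa only [coeffL_T_mul, add_sub_cancel_right] using h (n + m) (by omega)
  · rw [coeffL_T_mul]; exact h _ (by omega)

lemma mem_B1_iff {K kl : ℤ} {a b : L} : (a, b) ∈ B1 K kl ↔
    (∀ n : ℤ, 2 - K < n → coeffL a n = 0) ∧
      ∀ n : ℤ, -K < n → coeffL b n - kl * coeffL a (n + 1) = 0 := by
  simp only [B1, Submodule.mem_inf, Submodule.mem_comap, LinearMap.comp_apply,
    LinearMap.mulLeft_apply, LinearMap.fst_apply, LinearMap.sub_apply, LinearMap.smul_apply,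
    LinearMap.snd_apply, T_mul_mem_Lminus_iff, coeffL_sub, coeffL_smul, coeffL_T_mul, neg_sub,
    sub_neg_eq_add]

def principalPart (p : L) : L :=
  AddMonoidAlgebra.ofCoeff (Finsupp.filter (fun n => n < 0) (AddMonoidAlgebra.coeff p))

lemma coeffL_principalPart (p : L) (n : ℤ) :
    coeffL (principalPart p) n = if n < 0 then coeffL p n else 0 := by
  unfold coeffL principalPart; erw [AddMonoidAlgebra.coeff_ofCoeff, Finsupp.filter_apply]

lemma sub_principalPart_mem_Lplus (p : L) : p - principalPart p ∈ Lplus := by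
  intro n hn
  rw [coeffL_sub, coeffL_principalPart, if_pos hn, sub_self]

def classCoords (kl : ℤ) : V →ₗ[ℂ] (Fin 2 → ℂ) where
  toFun p := ![coeffL p.2 (-1), coeffL p.2 (-2) - kl * coeffL p.1 (-1)]
  map_add' p q := by
    ext i; fin_cases i <;> simp [coeffL_add, mul_add, add_sub_add_comm]
  map_smul' c p := by
    ext i; fin_cases i <;> simp [coeffL_smul, mul_sub, mul_left_comm]

lemma classCoords_T_neg_one (kl : ℤ) : classCoords kl ((0 : L), T (-1)) = Pi.single 0 1 := by
  ext i; fin_cases i <;> simp [classCoords, coeffL_T, coeffL_zero]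

lemma classCoords_T_neg_two (kl : ℤ) : classCoords kl ((0 : L), T (-2)) = Pi.single 1 1 := by
  ext i; fin_cases i <;> simp [classCoords, coeffL_T, coeffL_zero]

lemma classCoords_surjective (kl : ℤ) : Function.Surjective (classCoords kl) := by
  intro c
  refine ⟨c 0 • ((0 : L), T (-1)) + c 1 • ((0 : L), T (-2)), ?_⟩
  rw [map_add, map_smul, map_smul, classCoords_T_neg_one, classCoords_T_neg_two]
  ext i; fin_cases i <;> simp

lemma B0_le_ker_classCoords (kl : ℤ) : B0 ≤ LinearMap.ker (classCoords kl) := by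
  rintro ⟨a, b⟩ ⟨ha, hb⟩
  ext i
  fin_cases i <;> simp [classCoords, hb (-1) (by norm_num), hb (-2) (by norm_num),
    ha (-1) (by norm_num)]

lemma B1_le_ker_classCoords (kl : ℤ) : B1 3 kl ≤ LinearMap.ker (classCoords kl) := by
  rintro ⟨a, b⟩ hab
  obtain ⟨ha, hb⟩ := mem_B1_iff.mp hab
  have ha₀ : coeffL a 0 = 0 := ha 0 (by norm_num)
  have hb₁ : coeffL b (-1) = 0 := by simpa [ha₀] using hb (-1) (by norm_num)
  have hb₂ : coeffL b (-2) - kl * coeffL a (-1) = 0 := by simpa using hb (-2) (by norm_num)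
  ext i
  fin_cases i <;> simp [classCoords, hb₁, hb₂]

lemma ker_classCoords_le_B (kl : ℤ) : LinearMap.ker (classCoords kl) ≤ B 3 kl := by
  rintro ⟨a, b⟩ hab
  have hb₁ : coeffL b (-1) = 0 := by simpa [classCoords] using congrFun hab 0
  have hb₂ : coeffL b (-2) - kl * coeffL a (-1) = 0 := by
    simpa [classCoords] using congrFun hab 1
  have hB1 : (principalPart a, principalPart b) ∈ B1 3 kl := by
    refine mem_B1_iff.mpr ⟨fun n hn => ?_, fun n hn => ?_⟩
    · rw [coeffL_principalPart, if_neg (by omega)]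
    · obtain rfl | rfl | hn : n = -2 ∨ n = -1 ∨ 0 ≤ n := by omega
      · simpa [coeffL_principalPart] using hb₂
      · simpa [coeffL_principalPart] using hb₁
      · simp [coeffL_principalPart, show ¬n < 0 by omega, show ¬n + 1 < 0 by omega]
  have hsplit : ((a, b) : V) = (a - principalPart a, b - principalPart b) +
      (principalPart a, principalPart b) := by simp
  rw [hsplit]
  exact Submodule.add_mem_sup
    ⟨sub_principalPart_mem_Lplus a, sub_principalPart_mem_Lplus b⟩ hB1

lemma B_eq_ker_classCoords (kl : ℤ) : B 3 kl = LinearMap.ker (classCoords kl) :=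
  le_antisymm (sup_le (B0_le_ker_classCoords kl) (B1_le_ker_classCoords kl))
    (ker_classCoords_le_B kl)

def quotientEquiv (kl : ℤ) : (V ⧸ B 3 kl) ≃ₗ[ℂ] (Fin 2 → ℂ) :=
  (Submodule.quotEquivOfEq _ _ (B_eq_ker_classCoords kl)).trans
    ((classCoords kl).quotKerEquivOfSurjective (classCoords_surjective kl))

lemma quotientEquiv_mk (kl : ℤ) (v : V) :
    quotientEquiv kl (Submodule.Quotient.mk v) = classCoords kl v :=
  rfl

theorem stmt_1_general (kl K : ℤ) (hK3 : K = 3) :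
    (∃ bas : Module.Basis (Fin 2) ℂ (V ⧸ B K kl),
      bas 0 = Submodule.Quotient.mk ((0, T (-1)) : V) ∧
      bas 1 = Submodule.Quotient.mk ((0, T (-2)) : V)) ∧
    Module.finrank ℂ (V ⧸ B K kl) = 2 := by
  subst hK3
  refine ⟨⟨Module.Basis.ofEquivFun (quotientEquiv kl), ?_, ?_⟩, ?_⟩
  · rw [Module.Basis.coe_ofEquivFun, LinearEquiv.symm_apply_eq, quotientEquiv_mk,
      classCoords_T_neg_one]
  · rw [Module.Basis.coe_ofEquivFun, LinearEquiv.symm_apply_eq, quotientEquiv_mk,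
      classCoords_T_neg_two]
  · rw [(quotientEquiv kl).finrank_eq, Module.finrank_fin_fun]

/-- If `K = kᵢ + kⱼ = 3`, the classes mod `B` of the cocycles `(0, x⁻¹)` and
`(0, x⁻²)` form a basis of `V/B`; in particular `dim_ℂ V/B = 2`. -/
theorem stmt_1 (ki kj kl K : ℤ) (hK : K = ki + kj) (hK3 : K = 3) :
    (∃ bas : Module.Basis (Fin 2) ℂ (V ⧸ B K kl),
      bas 0 = Submodule.Quotient.mk ((0, T (-1)) : V) ∧
      bas 1 = Submodule.Quotient.mk ((0, T (-2)) : V)) ∧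
    Module.finrank ℂ (V ⧸ B K kl) = 2 :=
  stmt_1_general kl K hK3
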